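/- arXiv:1104.3466 — 2 statements merged into one kernel-verified Lean document; each statement's English description precedes it below -/
import Mathlib

section
/- Let V be a vector space over a finite field with q elements, and let S ⊆ V be a finite set of vectors that is not contained in a proper subspace U of V (i.e., some element of S lies outside U). If coefficients c_s are chosen independently and uniformly at random from the field for each s ∈ S, then the probability that Σ_{s∈S} c_s · s ∉ U is at least 1 − 1/q. -/
/-- Let `V` be a vector space over a finite field `F` with `q`
elements, `U` a subspace and `S` a finite set of vectors with some element of
`S` outside `U`.  If coefficients `c_s` are chosen independently and uniformly
at random (i.e. the tuple `c : S → F` is uniform among all `|F|^|S|` tuples),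
then the probability that `∑_{s ∈ S} c_s • s ∉ U` is at least `1 - 1/q`. -/
theorem stmt_5 (F V : Type*) [Field F] [Fintype F] [AddCommGroup V] [Module F V]
    (q : ℕ) (hq : q = Fintype.card F)
    (U : Submodule F V) (S : Finset V) (hS : ∃ s ∈ S, s ∉ U) :
    ((Nat.card {c : S → F // (∑ s : S, c s • (s : V)) ∉ U} : ℝ) /
      (Nat.card (S → F) : ℝ)) ≥ 1 - 1 / q := by
  classical
  obtain ⟨t, htS, htU⟩ := hS
  set s0 : S := ⟨t, htS⟩
  -- injection from bad tuples into functions on S \ {s0}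
  have hinj : Function.Injective
      (fun c : {c : S → F // (∑ s : S, c s • (s : V)) ∈ U} =>
        (fun s : {s : S // s ≠ s0} => c.1 s.1)) := by
    rintro ⟨c, hc⟩ ⟨c', hc'⟩ h
    have hoff : ∀ s : S, s ≠ s0 → c s = c' s := by
      intro s hs
      exact congrFun h ⟨s, hs⟩
    have hdiff : (∑ s : S, c s • (s : V)) - (∑ s : S, c' s • (s : V))
        = (c s0 - c' s0) • (t : V) := by
      rw [← Finset.sum_sub_distrib]
      have : ∀ s : S, c s • (s : V) - c' s • (s : V) = (c s - c' s) • (s : V) := by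
        intro s; rw [sub_smul]
      simp_rw [this]
      rw [Fintype.sum_eq_single s0]
      intro s hs
      rw [hoff s hs, sub_self, zero_smul]
    have hmem : (c s0 - c' s0) • (t : V) ∈ U := by
      rw [← hdiff]; exact U.sub_mem hc hc'
    have h0 : c s0 - c' s0 = 0 := by
      by_contra hne
      have hsc : (c s0 - c' s0)⁻¹ • ((c s0 - c' s0) • (t : V)) ∈ U :=
        U.smul_mem _ hmem
      rw [smul_smul, inv_mul_cancel₀ hne, one_smul] at hsc
      exact htU hsc
    exact Subtype.ext (funext fun s => by
      by_cases hs : s = s0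
      · rw [hs]; exact sub_eq_zero.mp h0
      · exact hoff s hs)
  have hcardF : 0 < Fintype.card F := Fintype.card_pos
  set n := Fintype.card S with hn
  have hn1 : 1 ≤ n := hn ▸ Fintype.card_pos_iff.mpr ⟨s0⟩
  clear_value n
  have hbad : Fintype.card {c : S → F // (∑ s : S, c s • (s : V)) ∈ U}
      ≤ q ^ (n - 1) := by
    calc Fintype.card {c : S → F // (∑ s : S, c s • (s : V)) ∈ U}
        ≤ Fintype.card ({s : S // s ≠ s0} → F) := Fintype.card_le_of_injective _ hinj
      _ = q ^ (n - 1) := by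
          rw [Fintype.card_fun, hq, Fintype.card_subtype_compl,
            Fintype.card_subtype_eq, hn]
  have htot : Fintype.card (S → F) = q ^ n := by
    rw [Fintype.card_fun, hq, hn]
  have hcompl : Fintype.card {c : S → F // (∑ s : S, c s • (s : V)) ∉ U}
      = q ^ n - Fintype.card {c : S → F // (∑ s : S, c s • (s : V)) ∈ U} := by
    rw [← htot]
    exact Fintype.card_subtype_compl _
  have hgood : (q : ℕ) ^ n - q ^ (n - 1)
      ≤ Fintype.card {c : S → F // (∑ s : S, c s • (s : V)) ∉ U} := by
    rw [hcompl]
    exact Nat.sub_le_sub_left hbad _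
  -- now real arithmetic
  rw [Nat.card_eq_fintype_card, Nat.card_eq_fintype_card, htot]
  have hq2 : 2 ≤ q := hq ▸ Fintype.one_lt_card
  have hqR : (0 : ℝ) < q := by positivity
  have hNpos : (0 : ℝ) < (q : ℝ) ^ n := by positivity
  have key : (q : ℝ) * (q : ℝ) ^ (n - 1) = (q : ℝ) ^ n := by
    rw [← pow_succ']
    congr 1
    exact Nat.succ_pred_eq_of_pos hn1
  have heq : (1 : ℝ) - 1 / q = ((q : ℝ) ^ n - (q : ℝ) ^ (n - 1)) / (q : ℝ) ^ n := by
    field_simp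
    nlinarith [key]
  have hgoodR : ((q : ℝ) ^ n - (q : ℝ) ^ (n - 1))
      ≤ (Fintype.card {c : S → F // (∑ s : S, c s • (s : V)) ∉ U} : ℝ) := by
    calc ((q : ℝ) ^ n - (q : ℝ) ^ (n - 1))
        = ((q ^ n - q ^ (n - 1) : ℕ) : ℝ) := by
          push_cast [Nat.cast_sub (Nat.pow_le_pow_right (le_trans one_le_two hq2) (Nat.sub_le n 1))]
          ring
      _ ≤ _ := Nat.cast_le.mpr hgood
  rw [ge_iff_le, heq]
  push_cast
  exact (div_le_div_iff_of_pos_right hNpos).mpr hgoodR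
end

section
/- Let V be a vector space over a finite field of size q, let S_v and S_u be subspaces with S_v ⊄ S_u, and let w be obtained by adding to a subspace S_w ⊆ S_u a random linear combination x of a spanning set of S_v (coefficients uniform and independent). Then the probability that the new span S_w + span{x} is not contained in S_u is at least 1 − 1/q. -/
/-- Let `V` be a vector space over a finite field of size `q`,
`S_v, S_u` subspaces with `S_v ⊄ S_u`, and `S_w ⊆ S_u` a subspace.  If
`x = ∑_{t ∈ T} c_t • t` is a random linear combination of a spanning set `T`
of `S_v` (coefficients independent and uniform), then the probability that
`S_w + span{x}` is not contained in `S_u` is at least `1 - 1/q`. -/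
theorem stmt_6 (F V : Type*) [Field F] [Fintype F] [AddCommGroup V] [Module F V]
    (q : ℕ) (hq : q = Fintype.card F)
    (Su Sv Sw : Submodule F V) (hwu : Sw ≤ Su) (hvu : ¬ Sv ≤ Su)
    (T : Finset V) (hT : Submodule.span F (T : Set V) = Sv) :
    ((Nat.card {c : T → F //
        ¬ (Sw ⊔ Submodule.span F {∑ t : T, c t • (t : V)}) ≤ Su} : ℝ) /
      (Nat.card (T → F) : ℝ)) ≥ 1 - 1 / q := by
  classical
  obtain ⟨t0, ht0T, ht0⟩ : ∃ t ∈ T, (t : V) ∉ Su := by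
    by_contra h
    push_neg at h
    exact hvu (hT ▸ Submodule.span_le.mpr h)
  obtain ⟨t₀, ht₀u⟩ : ∃ t : T, (t : V) ∉ Su := ⟨⟨t0, ht0T⟩, ht0⟩
  have key : ∀ c : T → F,
      (¬ (Sw ⊔ Submodule.span F {∑ t : T, c t • (t : V)}) ≤ Su) ↔
        ∑ t : T, c t • (t : V) ∉ Su := by
    intro c
    rw [sup_le_iff, Submodule.span_le, Set.singleton_subset_iff]
    simp [hwu]
  -- injectivity of forgetting the t₀ coordinate on bad tuples
  have hinj : Function.Injective
      (fun (c : {c : T → F // ∑ t : T, c t • (t : V) ∈ Su}) =>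
        (fun s : {t : T // t ≠ t₀} => c.1 s.1)) := by
    rintro ⟨c, hc⟩ ⟨c', hc'⟩ h
    simp only at h
    have hagree : ∀ t : T, t ≠ t₀ → c t = c' t := fun t ht => congrFun h ⟨t, ht⟩
    have hdiff : ∑ t : T, c t • (t : V) - ∑ t : T, c' t • (t : V)
        = (c t₀ - c' t₀) • (t₀ : V) := by
      rw [← Finset.sum_sub_distrib]
      have : ∀ t : T, c t • (t : V) - c' t • (t : V) = (c t - c' t) • (t : V) := by
        intro t; rw [sub_smul]
      simp_rw [this]
      apply Fintype.sum_eq_single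
      intro t ht
      rw [hagree t ht, sub_self, zero_smul]
    have hmem : (c t₀ - c' t₀) • (t₀ : V) ∈ Su := hdiff ▸ Su.sub_mem hc hc'
    have heq0 : c t₀ = c' t₀ := by
      by_contra hne
      have hne' : c t₀ - c' t₀ ≠ 0 := sub_ne_zero.mpr hne
      have : (t₀ : V) ∈ Su := by
        have := Su.smul_mem (c t₀ - c' t₀)⁻¹ hmem
        rwa [inv_smul_smul₀ hne'] at this
      exact ht₀u this
    have : c = c' := by
      funext t
      by_cases ht : t = t₀
      · rw [ht]; exact heq0
      · exact hagree t ht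
    simp [this]
  have hcardbad : Fintype.card {c : T → F // ∑ t : T, c t • (t : V) ∈ Su}
      ≤ q ^ (T.card - 1) := by
    calc Fintype.card {c : T → F // ∑ t : T, c t • (t : V) ∈ Su}
        ≤ Fintype.card ({t : T // t ≠ t₀} → F) := Fintype.card_le_of_injective _ hinj
      _ = q ^ (T.card - 1) := by
          rw [Fintype.card_fun, ← hq]
          congr 1
          rw [Fintype.card_subtype_compl, Fintype.card_subtype_eq, Fintype.card_coe]
  have hn1 : 1 ≤ T.card := Finset.card_pos.mpr ⟨t0, ht0T⟩
  have htot : Nat.card (T → F) = q ^ T.card := by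
    rw [Nat.card_eq_fintype_card, Fintype.card_fun, Fintype.card_coe, hq]
  have hgoodcard : Nat.card {c : T → F //
      ¬ (Sw ⊔ Submodule.span F {∑ t : T, c t • (t : V)}) ≤ Su}
      = Fintype.card {c : T → F // ∑ t : T, c t • (t : V) ∉ Su} := by
    rw [Nat.card_eq_fintype_card]
    exact Fintype.card_congr (Equiv.subtypeEquivRight key)
  have hcompl : Fintype.card {c : T → F // ∑ t : T, c t • (t : V) ∉ Su}
      = q ^ T.card - Fintype.card {c : T → F // ∑ t : T, c t • (t : V) ∈ Su} := by
    rw [Fintype.card_subtype_compl, Fintype.card_fun, Fintype.card_coe, hq]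
  have hgood : q ^ T.card - q ^ (T.card - 1) ≤ Nat.card {c : T → F //
      ¬ (Sw ⊔ Submodule.span F {∑ t : T, c t • (t : V)}) ≤ Su} := by
    rw [hgoodcard, hcompl]
    exact Nat.sub_le_sub_left hcardbad _
  have hq2 : 2 ≤ q := hq ▸ Fintype.one_lt_card
  have hq0 : (0 : ℝ) < q := by positivity
  have hbadle : q ^ (T.card - 1) ≤ q ^ T.card :=
    Nat.pow_le_pow_right (le_trans one_le_two hq2) (Nat.sub_le _ _)
  have hpow : (0 : ℝ) < ((q ^ T.card : ℕ) : ℝ) := by positivity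
  rw [ge_iff_le, htot, le_div_iff₀ hpow]
  push_cast
  have hqne : (q : ℝ) ≠ 0 := ne_of_gt hq0
  calc (1 - 1 / (q : ℝ)) * (q : ℝ) ^ T.card
      = (q : ℝ) ^ T.card - (q : ℝ) ^ T.card / q := by ring
    _ = (q : ℝ) ^ T.card - (q : ℝ) ^ (T.card - 1) := by
        congr 1
        rw [div_eq_iff hqne, ← pow_succ, Nat.sub_add_cancel hn1]
    _ = ((q ^ T.card - q ^ (T.card - 1) : ℕ) : ℝ) := by
        rw [Nat.cast_sub hbadle]; push_cast; ring
    _ ≤ _ := by exact_mod_cast hgood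
end
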